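/- There is a bijection between categories with a fixed set of objects C₀ and acircuit 1-hypercategories over the labeling set C₀ ⨿ C̄₀ (with conjugation A ↦ Ā) all of whose 1-hyperoperators have boundary of the form (A, B̄): an arrow f : A → B corresponds to a 1-hyperoperator with boundary (A, B̄), and the algebra structure on linear (composable-sequence) pasting diagrams corresponds to composition in the category. -/
import Mathlib


universe u v w

/-- Connected acircuit `1`-pasting diagrams over a `1`-hypergraph whose
`1`-hyperoperators `E` have boundaries of the form `(A, B̄)`: these are exactly
the (possibly empty) composable sequences of operators. -/
inductive PSeq {C₀ : Type u} (E : C₀ → C₀ → Type v) : C₀ → C₀ → Type (max u v)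
  | nil (A : C₀) : PSeq E A A
  | cons {A B C : C₀} : E A B → PSeq E B C → PSeq E A C

namespace PSeq

/-- The pasting diagram consisting solely of one cell. -/
def single {C₀ : Type u} {E : C₀ → C₀ → Type v} {A B : C₀} (e : E A B) : PSeq E A B :=
  cons e (nil B)

/-- Relabelling the cells of a pasting diagram. -/
def map {C₀ : Type u} {E : C₀ → C₀ → Type v} {E' : C₀ → C₀ → Type w} (f : ∀ {A B}, E A B → E' A B) :
    ∀ {A B}, PSeq E A B → PSeq E' A B
  | _, _, nil A => nil A
  | _, _, cons e p => cons (f e) (map f p)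

/-- Concatenation of composable pasting diagrams. -/
def append {C₀ : Type u} {E : C₀ → C₀ → Type v} :
    ∀ {A B C}, PSeq E A B → PSeq E B C → PSeq E A C
  | _, _, _, nil _, q => q
  | _, _, _, cons e p, q => cons e (append p q)

/-- The substitution `μ` of the pasting-diagram monad: a composable sequence of
composable sequences flattens to a composable sequence. -/
def join {C₀ : Type u} {E : C₀ → C₀ → Type v} :
    ∀ {A B}, PSeq (PSeq E) A B → PSeq E A B
  | _, _, nil A => nil A
  | _, _, cons p q => append p (join q)

end PSeq

/-- A category structure with a fixed set of objects `C₀`. -/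
structure CatOn (C₀ : Type u) where
  Hom : C₀ → C₀ → Type v
  id : ∀ A, Hom A A
  comp : ∀ {A B C}, Hom A B → Hom B C → Hom A C
  id_comp : ∀ {A B} (f : Hom A B), comp (id A) f = f
  comp_id : ∀ {A B} (f : Hom A B), comp f (id B) = f
  assoc : ∀ {A B C D} (f : Hom A B) (g : Hom B C) (h : Hom C D),
    comp (comp f g) h = comp f (comp g h)

/-- An acircuit `1`-hypercategory over `C₀ ⨿ C̄₀` all of whose
`1`-hyperoperators have boundary of the form `(A, B̄)` (a `1`-hyperoperator
with boundary `(A, B̄)` is recorded as an element of `E A B`): an algebra over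
the monad of connected acircuit pasting diagrams. -/
structure AcircuitHC (C₀ : Type u) where
  E : C₀ → C₀ → Type v
  act : ∀ {A B}, PSeq E A B → E A B
  act_single : ∀ {A B} (e : E A B), act (PSeq.single e) = e
  act_join : ∀ {A B} (P : PSeq (PSeq E) A B),
    act P.join = act (P.map (fun {_ _} p => act p))

/-- A category with objects `C₀` gives an acircuit `1`-hypercategory: the
hyperoperator with boundary `(A, B̄)` corresponding to an arrow `f : A → B`,
and the algebra structure on composable sequences being iterated
composition.

Iterated composition of a composable sequence of arrows. -/
def evalSeq {C₀ : Type u} (C : CatOn.{u, v} C₀) : ∀ {A B}, PSeq C.Hom A B → C.Hom A B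
  | _, _, .nil A => C.id A
  | _, _, .cons e p => C.comp e (evalSeq C p)

lemma evalSeq_append {C₀ : Type u} (C : CatOn.{u, v} C₀) {A B D : C₀}
    (p : PSeq C.Hom A B) (q : PSeq C.Hom B D) :
    evalSeq C (p.append q) = C.comp (evalSeq C p) (evalSeq C q) := by
  induction p with
  | nil A => simp [PSeq.append, evalSeq, C.id_comp]
  | cons e p ih => simp [PSeq.append, evalSeq, ih, C.assoc]

def toHC {C₀ : Type u} (C : CatOn.{u, v} C₀) : AcircuitHC.{u, v} C₀ where
  E := C.Hom
  act := evalSeq C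
  act_single := fun e => C.comp_id e
  act_join := by
    intro A B P
    induction P with
    | nil A => rfl
    | cons p Q ih => simp [PSeq.join, PSeq.map, evalSeq, evalSeq_append, ih]


namespace PSeq

lemma append_nil {C₀ : Type u} {E : C₀ → C₀ → Type v} {A B : C₀} (p : PSeq E A B) :
    p.append (nil B) = p := by
  induction p with
  | nil A => rfl
  | cons e p ih => simp [append, ih]

end PSeq

section Inverse

variable {C₀ : Type u} (H : AcircuitHC.{u, v} C₀)

lemma act_single' {A B : C₀} (e : H.E A B) : H.act (.cons e (.nil B)) = e :=
  H.act_single e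

lemma act_cons {A B D : C₀} (e : H.E A B) (p : PSeq H.E B D) :
    H.act (.cons e p) = H.act (.cons e (.cons (H.act p) (.nil D))) := by
  have h := H.act_join (.cons (.single e) (.single p))
  simpa [PSeq.join, PSeq.map, PSeq.append, PSeq.single, act_single',
    PSeq.append_nil] using h

/-- The inverse construction: an acircuit 1-hypercategory gives a category. -/
def fromHC : CatOn.{u, v} C₀ where
  Hom := H.E
  id A := H.act (.nil A)
  comp f g := H.act (.cons f (.single g))
  id_comp := by
    intro A B f
    have h := H.act_join (.cons (.nil A) (.single (.single f)))
    simp only [PSeq.single]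
    simpa [PSeq.join, PSeq.map, PSeq.append, PSeq.single, act_single',
      PSeq.append_nil] using h.symm
  comp_id := by
    intro A B f
    have h := H.act_join (.cons (.single f) (.single (.nil B)))
    simp only [PSeq.single]
    simpa [PSeq.join, PSeq.map, PSeq.append, PSeq.single, act_single',
      PSeq.append_nil] using h.symm
  assoc := by
    intro A B C D f g h
    have h1 := H.act_join (.cons (.cons f (.single g)) (.single (.single h)))
    have h2 := H.act_join (.cons (.single f) (.single (.cons g (.single h))))
    simp only [PSeq.join, PSeq.map, PSeq.append, PSeq.single, act_single',
      PSeq.append_nil] at h1 h2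
    simp only [PSeq.single]
    rw [← h1, ← h2]

lemma eval_fromHC : ∀ {A B : C₀} (p : PSeq H.E A B), evalSeq (fromHC H) p = H.act p := by
  intro A B p
  induction p with
  | nil A => rfl
  | cons e p ih =>
    show H.act (.cons e (.single (evalSeq (fromHC H) p))) = _
    rw [ih]
    simp only [PSeq.single]
    exact (act_cons H e p).symm

end Inverse

lemma toHC_fromHC {C₀ : Type u} (H : AcircuitHC.{u, v} C₀) : toHC (fromHC H) = H := by
  have hact : @evalSeq C₀ (fromHC H) = @H.act := by
    funext A B p; exact eval_fromHC H p
  cases H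
  unfold toHC
  congr 1

lemma fromHC_toHC {C₀ : Type u} (C : CatOn.{u, v} C₀) : fromHC (toHC C) = C := by
  have hcomp : (fun {A B D : C₀} (f : C.Hom A B) (g : C.Hom B D) =>
      evalSeq C (.cons f (.single g))) = @CatOn.comp C₀ C := by
    funext A B D f g
    simp [evalSeq, PSeq.single, C.comp_id]
  cases C
  unfold fromHC toHC
  congr 1

/-- There is a bijection between categories with objects `C₀` and acircuit
`1`-hypercategories over `C₀ ⨿ C̄₀` whose hyperoperators have boundaries of the
form `(A, B̄)`: it is given by sending a category to the algebra of iterated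
composition on composable sequences. -/
theorem stmt_14 (C₀ : Type u) : Function.Bijective (toHC.{u, v} (C₀ := C₀)) := by
  rw [Function.bijective_iff_has_inverse]
  exact ⟨fromHC, fromHC_toHC, toHC_fromHC⟩
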